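/- There exists a constant C > 0 such that for all continuously differentiable functions u, v : [0,1] → ℂ, (∫₀¹ |𝓖(u(x)) − 𝓖(v(x))|² dx)^{1/2} ≤ C·(‖u‖⁴_{H¹} + ‖v‖⁴_{H¹})·(∫₀¹ |u(x) − v(x)|² dx)^{1/2}. -/

import Mathlib

open Set MeasureTheory

/-- The quintic Ginzburg–Landau nonlinearity `𝓖(A) = (-1+i)|A|⁴A`. -/
noncomputable def quinticGL (z : ℂ) : ℂ :=
  (-1 + Complex.I) * ((‖z‖ : ℝ) : ℂ)^4 * z


lemma key_real (x y d : ℝ) (hx : 0 ≤ x) (hy : 0 ≤ y) (hd : 0 ≤ d)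
    (h1 : x - y ≤ d) (h2 : y - x ≤ d) :
    Real.sqrt 2 * (x^4 * d + |x^4 - y^4| * y) ≤ 8 * (x^4 + y^4) * d := by
  have hs : Real.sqrt 2 ≤ 1.6 := by
    nlinarith [Real.sq_sqrt (show (0:ℝ) ≤ 2 by norm_num), Real.sqrt_nonneg 2]
  have hs0 : (0:ℝ) ≤ Real.sqrt 2 := Real.sqrt_nonneg 2
  have key : x^4 * d + |x^4 - y^4| * y ≤ 5 * (x^4 + y^4) * d := by
    have h4 : |x^4 - y^4| * y ≤ 4 * (x^4 + y^4) * d := by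
      rcases le_total x y with h | h
      · have hp : x^4 ≤ y^4 := pow_le_pow_left₀ hx h 4
        rw [abs_of_nonpos (by linarith : x^4 - y^4 ≤ 0)]
        have hB : (0:ℝ) ≤ (y^3 + y^2*x + y*x^2 + x^3) * y := by positivity
        have hb : (y^3 + y^2*x + y*x^2 + x^3) * y ≤ 4 * (x^4 + y^4) := by
          nlinarith [sq_nonneg (x*y - y^2), sq_nonneg (x^2 - y^2), sq_nonneg (x^2 - x*y),
            mul_nonneg hx hy, mul_nonneg (mul_nonneg hx hy) hy, sq_nonneg (x - y),
            mul_nonneg (mul_nonneg hx hx) (mul_nonneg hy hy)]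
        have hfac : -(x^4 - y^4) * y = (y - x) * ((y^3 + y^2*x + y*x^2 + x^3) * y) := by ring
        rw [hfac]
        calc (y - x) * ((y^3 + y^2*x + y*x^2 + x^3) * y)
            ≤ d * ((y^3 + y^2*x + y*x^2 + x^3) * y) := mul_le_mul_of_nonneg_right h2 hB
          _ ≤ d * (4 * (x^4 + y^4)) := mul_le_mul_of_nonneg_left hb hd
          _ = 4 * (x^4 + y^4) * d := by ring
      · have hp : y^4 ≤ x^4 := pow_le_pow_left₀ hy h 4
        rw [abs_of_nonneg (by linarith : 0 ≤ x^4 - y^4)]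
        have hB : (0:ℝ) ≤ (x^3 + x^2*y + x*y^2 + y^3) * y := by positivity
        have hb : (x^3 + x^2*y + x*y^2 + y^3) * y ≤ 4 * (x^4 + y^4) := by
          nlinarith [sq_nonneg (x*y - y^2), sq_nonneg (x^2 - y^2), sq_nonneg (x^2 - x*y),
            mul_nonneg hx hy, mul_nonneg (mul_nonneg hx hy) hy, sq_nonneg (x - y),
            mul_nonneg (mul_nonneg hx hx) (mul_nonneg hy hy)]
        have hfac : (x^4 - y^4) * y = (x - y) * ((x^3 + x^2*y + x*y^2 + y^3) * y) := by ring
        rw [hfac]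
        calc (x - y) * ((x^3 + x^2*y + x*y^2 + y^3) * y)
            ≤ d * ((x^3 + x^2*y + x*y^2 + y^3) * y) := mul_le_mul_of_nonneg_right h1 hB
          _ ≤ d * (4 * (x^4 + y^4)) := mul_le_mul_of_nonneg_left hb hd
          _ = 4 * (x^4 + y^4) * d := by ring
    nlinarith [mul_nonneg (pow_nonneg hx 4) hd, pow_nonneg hy 4, pow_nonneg hx 4]
  have hL : 0 ≤ x^4 * d + |x^4 - y^4| * y :=
    add_nonneg (mul_nonneg (pow_nonneg hx 4) hd) (mul_nonneg (abs_nonneg _) hy)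
  nlinarith [mul_le_mul hs key hL (by norm_num : (0:ℝ) ≤ 1.6)]


lemma quinticGL_cont : Continuous quinticGL := by
  unfold quinticGL
  continuity

lemma quintic_ptwise (a b : ℂ) :
    ‖quinticGL a - quinticGL b‖
      ≤ 8 * ((‖a‖)^4 + (‖b‖)^4) * ‖a - b‖ := by
  set x := ‖a‖ with hxd
  set y := ‖b‖ with hyd
  have h1 : quinticGL a - quinticGL b
      = (-1 + Complex.I) * (((x:ℝ):ℂ)^4 * (a - b) + ((x^4 - y^4 : ℝ):ℂ) * b) := by
    simp only [quinticGL, ← hxd, ← hyd]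
    push_cast
    ring
  rw [h1, norm_mul]
  have habs : ‖-1 + Complex.I‖ = Real.sqrt 2 := by
    rw [Complex.norm_def, Complex.normSq_apply]
    norm_num
  rw [habs]
  have h2 : ‖((x:ℝ):ℂ)^4 * (a - b) + ((x^4 - y^4 : ℝ):ℂ) * b‖
      ≤ x^4 * ‖a - b‖ + |x^4 - y^4| * y := by
    refine le_trans (norm_add_le _ _) ?_
    rw [norm_mul, norm_mul, norm_pow, Complex.norm_real, Complex.norm_real, Real.norm_eq_abs,
      Real.norm_eq_abs, abs_of_nonneg (norm_nonneg a)]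
  refine le_trans (mul_le_mul_of_nonneg_left h2 (Real.sqrt_nonneg 2)) ?_
  exact key_real x y (‖a - b‖) (norm_nonneg a) (norm_nonneg b)
    (norm_nonneg _) (by simpa using norm_sub_norm_le a b)
    (by simpa [norm_sub_rev] using norm_sub_norm_le b a)

lemma sup_bound (u u' : ℝ → ℂ)
    (hu : ∀ x ∈ Icc (0:ℝ) 1, HasDerivAt u (u' x) x)
    (hu' : ContinuousOn u' (Icc (0:ℝ) 1)) :
    ∀ x ∈ Icc (0:ℝ) 1, (‖u x‖)^2
      ≤ 2 * ((∫ t in (0:ℝ)..1, ‖u t‖^2) + ∫ t in (0:ℝ)..1, ‖u' t‖^2) := by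
  intro x hx
  have hucont : ContinuousOn u (Icc (0:ℝ) 1) := fun z hz => (hu z hz).continuousAt.continuousWithinAt
  -- f = |u|²
  set f : ℝ → ℝ := fun z => (u z).re^2 + (u z).im^2 with hf
  set g : ℝ → ℝ := fun z => 2*(u z).re*(u' z).re + 2*(u z).im*(u' z).im with hg
  have hfabs : ∀ z, f z = ‖u z‖^2 := by
    intro z; rw [hf]; rw [Complex.sq_norm, Complex.normSq_apply]; ring
  have hfd : ∀ z ∈ Icc (0:ℝ) 1, HasDerivAt f (g z) z := by
    intro z hz
    have h1 : HasDerivAt (fun w => (u w).re) ((u' z).re) z :=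
      (Complex.reCLM.hasFDerivAt.comp_hasDerivAt z (hu z hz))
    have h2 : HasDerivAt (fun w => (u w).im) ((u' z).im) z :=
      (Complex.imCLM.hasFDerivAt.comp_hasDerivAt z (hu z hz))
    have := ((h1.pow 2).add (h2.pow 2))
    refine HasDerivAt.congr_deriv (f := f) this ?_
    simp only [hg]
    ring
  have hfcont : ContinuousOn f (Icc (0:ℝ) 1) := by
    apply ContinuousOn.add
    · exact ((Complex.continuous_re.comp_continuousOn hucont).pow 2)
    · exact ((Complex.continuous_im.comp_continuousOn hucont).pow 2)
  have hgcont : ContinuousOn g (Icc (0:ℝ) 1) := by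
    apply ContinuousOn.add
    · exact (continuousOn_const.mul (Complex.continuous_re.comp_continuousOn hucont)).mul
        (Complex.continuous_re.comp_continuousOn hu')
    · exact (continuousOn_const.mul (Complex.continuous_im.comp_continuousOn hucont)).mul
        (Complex.continuous_im.comp_continuousOn hu')
  -- min point
  obtain ⟨y, hy, hymin⟩ := isCompact_Icc.exists_isMinOn (nonempty_Icc.mpr zero_le_one) hfcont
  have hA : f y ≤ ∫ t in (0:ℝ)..1, ‖u t‖^2 := by
    have : ∫ t in (0:ℝ)..1, f y ≤ ∫ t in (0:ℝ)..1, f t := by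
      apply intervalIntegral.integral_mono_on zero_le_one intervalIntegrable_const
        (by apply ContinuousOn.intervalIntegrable; rw [uIcc_of_le zero_le_one]; exact hfcont)
      intro t ht; exact hymin ht
    simp only [intervalIntegral.integral_const, smul_eq_mul, sub_zero, one_mul] at this
    calc f y ≤ ∫ t in (0:ℝ)..1, f t := this
      _ = ∫ t in (0:ℝ)..1, ‖u t‖^2 := by
          apply intervalIntegral.integral_congr; intro t _; exact hfabs t
  -- FTC
  have hsub : uIcc y x ⊆ Icc (0:ℝ) 1 := uIcc_subset_Icc hy hx
  have hftc : ∫ t in y..x, g t = f x - f y := by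
    apply intervalIntegral.integral_eq_sub_of_hasDerivAt
    · intro t ht; exact hfd t (hsub ht)
    · exact (hgcont.mono hsub).intervalIntegrable
  -- bound the integral of g
  have hgb : ∀ t ∈ Icc (0:ℝ) 1, |g t| ≤ ‖u t‖^2 + ‖u' t‖^2 := by
    intro t ht
    have h1 : ‖u t‖^2 = (u t).re^2 + (u t).im^2 := by
      rw [Complex.sq_norm, Complex.normSq_apply]; ring
    have h2 : ‖u' t‖^2 = (u' t).re^2 + (u' t).im^2 := by
      rw [Complex.sq_norm, Complex.normSq_apply]; ring
    rw [h1, h2, abs_le]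
    simp only [hg]
    constructor
    · nlinarith [sq_nonneg ((u t).re + (u' t).re), sq_nonneg ((u t).im + (u' t).im)]
    · nlinarith [sq_nonneg ((u t).re - (u' t).re), sq_nonneg ((u t).im - (u' t).im)]
  have hbnd : ∫ t in y..x, g t ≤ (∫ t in (0:ℝ)..1, ‖u t‖^2)
      + ∫ t in (0:ℝ)..1, ‖u' t‖^2 := by
    have hIsub : Set.uIoc y x ⊆ Ioc (0:ℝ) 1 := by
      rw [uIoc_eq_union]
      rintro t (ht | ht)
      · exact ⟨lt_of_le_of_lt hy.1 ht.1, le_trans ht.2 hx.2⟩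
      · exact ⟨lt_of_le_of_lt hx.1 ht.1, le_trans ht.2 hy.2⟩
    have habs : |∫ t in y..x, g t| ≤ ∫ t in Set.uIoc y x, |g t| := by
      simpa using intervalIntegral.norm_integral_le_integral_norm_uIoc (f := g) (a := y) (b := x)
    have hginteg : IntegrableOn (fun t => |g t|) (Ioc (0:ℝ) 1) := by
      exact ((hgcont.integrableOn_compact isCompact_Icc).mono_set Ioc_subset_Icc_self).abs
    have hmono : ∫ t in Set.uIoc y x, |g t| ≤ ∫ t in Ioc (0:ℝ) 1, |g t| := by
      apply setIntegral_mono_set hginteg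
      · exact Filter.Eventually.of_forall fun t => abs_nonneg _
      · exact Filter.Eventually.of_forall hIsub
    have hfin : ∫ t in Ioc (0:ℝ) 1, |g t| ≤ (∫ t in (0:ℝ)..1, ‖u t‖^2)
        + ∫ t in (0:ℝ)..1, ‖u' t‖^2 := by
      rw [← intervalIntegral.integral_of_le zero_le_one, ← intervalIntegral.integral_add]
      · apply intervalIntegral.integral_mono_on zero_le_one
        · exact (IntegrableOn.intervalIntegrable (by
            rw [uIcc_of_le zero_le_one]
            exact ((hgcont.integrableOn_compact isCompact_Icc).abs)))
        · apply ContinuousOn.intervalIntegrable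
          rw [uIcc_of_le zero_le_one]
          exact ((continuous_norm.comp_continuousOn hucont).pow 2).add
            ((continuous_norm.comp_continuousOn hu').pow 2)
        · exact hgb
      · apply ContinuousOn.intervalIntegrable
        rw [uIcc_of_le zero_le_one]
        exact (continuous_norm.comp_continuousOn hucont).pow 2
      · apply ContinuousOn.intervalIntegrable
        rw [uIcc_of_le zero_le_one]
        exact (continuous_norm.comp_continuousOn hu').pow 2
    calc ∫ t in y..x, g t ≤ |∫ t in y..x, g t| := le_abs_self _
      _ ≤ ∫ t in Set.uIoc y x, |g t| := habs
      _ ≤ ∫ t in Ioc (0:ℝ) 1, |g t| := hmono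
      _ ≤ _ := hfin
  have hBnn : 0 ≤ ∫ t in (0:ℝ)..1, ‖u' t‖^2 :=
    intervalIntegral.integral_nonneg zero_le_one (fun t _ => sq_nonneg _)
  have hAnn : 0 ≤ ∫ t in (0:ℝ)..1, ‖u t‖^2 :=
    intervalIntegral.integral_nonneg zero_le_one (fun t _ => sq_nonneg _)
  have := hftc ▸ hbnd
  rw [← hfabs x]
  linarith

/-- Local Lipschitz estimate for the quintic nonlinearity:
`‖𝓖(u) - 𝓖(v)‖_{L²} ≤ C (‖u‖⁴_{H¹} + ‖v‖⁴_{H¹}) ‖u - v‖_{L²}`. -/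
theorem quinticGL_lipschitz :
    ∃ C : ℝ, 0 < C ∧
      ∀ (u u' v v' : ℝ → ℂ),
        (∀ x ∈ Icc (0:ℝ) 1, HasDerivAt u (u' x) x) →
        ContinuousOn u' (Icc (0:ℝ) 1) →
        (∀ x ∈ Icc (0:ℝ) 1, HasDerivAt v (v' x) x) →
        ContinuousOn v' (Icc (0:ℝ) 1) →
        Real.sqrt (∫ x in (0:ℝ)..1, ‖quinticGL (u x) - quinticGL (v x)‖^2)
          ≤ C * ((((∫ x in (0:ℝ)..1, ‖u x‖^2)
                  + ∫ x in (0:ℝ)..1, ‖u' x‖^2))^2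
              + (((∫ x in (0:ℝ)..1, ‖v x‖^2)
                  + ∫ x in (0:ℝ)..1, ‖v' x‖^2))^2)
            * Real.sqrt (∫ x in (0:ℝ)..1, ‖u x - v x‖^2) := by
  refine ⟨32, by norm_num, ?_⟩
  intro u u' v v' hu hu' hv hv'
  set Au := ∫ x in (0:ℝ)..1, ‖u x‖^2 with hAu
  set Bu := ∫ x in (0:ℝ)..1, ‖u' x‖^2 with hBu
  set Av := ∫ x in (0:ℝ)..1, ‖v x‖^2 with hAv
  set Bv := ∫ x in (0:ℝ)..1, ‖v' x‖^2 with hBv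
  set S := (Au + Bu)^2 + (Av + Bv)^2 with hS
  have hucont : ContinuousOn u (Icc (0:ℝ) 1) := fun z hz => (hu z hz).continuousAt.continuousWithinAt
  have hvcont : ContinuousOn v (Icc (0:ℝ) 1) := fun z hz => (hv z hz).continuousAt.continuousWithinAt
  have hSnn : 0 ≤ S := add_nonneg (sq_nonneg _) (sq_nonneg _)
  -- pointwise bound on Icc
  have hpt : ∀ x ∈ Icc (0:ℝ) 1,
      ‖quinticGL (u x) - quinticGL (v x)‖ ≤ 32 * S * ‖u x - v x‖ := by
    intro x hx
    have h1 := sup_bound u u' hu hu' x hx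
    have h2 := sup_bound v v' hv hv' x hx
    have h1' : (‖u x‖)^4 ≤ 4 * (Au + Bu)^2 := by
      have : (‖u x‖)^4 = ((‖u x‖)^2)^2 := by ring
      rw [this]
      calc ((‖u x‖)^2)^2 ≤ (2 * (Au + Bu))^2 := by
            apply pow_le_pow_left₀ (sq_nonneg _) h1
        _ = 4 * (Au + Bu)^2 := by ring
    have h2' : (‖v x‖)^4 ≤ 4 * (Av + Bv)^2 := by
      have : (‖v x‖)^4 = ((‖v x‖)^2)^2 := by ring
      rw [this]
      calc ((‖v x‖)^2)^2 ≤ (2 * (Av + Bv))^2 := by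
            apply pow_le_pow_left₀ (sq_nonneg _) h2
        _ = 4 * (Av + Bv)^2 := by ring
    calc ‖quinticGL (u x) - quinticGL (v x)‖
        ≤ 8 * ((‖u x‖)^4 + (‖v x‖)^4) * ‖u x - v x‖ :=
          quintic_ptwise _ _
      _ ≤ 32 * S * ‖u x - v x‖ := by
          apply mul_le_mul_of_nonneg_right _ (norm_nonneg _)
          nlinarith []
  -- integral bound
  have hIle : (∫ x in (0:ℝ)..1, ‖quinticGL (u x) - quinticGL (v x)‖^2)
      ≤ (32 * S)^2 * ∫ x in (0:ℝ)..1, ‖u x - v x‖^2 := by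
    rw [← intervalIntegral.integral_const_mul]
    apply intervalIntegral.integral_mono_on zero_le_one
    · apply ContinuousOn.intervalIntegrable
      rw [uIcc_of_le zero_le_one]
      exact ((continuous_norm.comp_continuousOn
        ((quinticGL_cont.comp_continuousOn hucont).sub
          (quinticGL_cont.comp_continuousOn hvcont))).pow 2)
    · apply ContinuousOn.intervalIntegrable
      rw [uIcc_of_le zero_le_one]
      exact continuousOn_const.mul
        ((continuous_norm.comp_continuousOn (hucont.sub hvcont)).pow 2)
    · intro x hx
      have := hpt x hx
      have hnn : 0 ≤ ‖quinticGL (u x) - quinticGL (v x)‖ := norm_nonneg _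
      calc ‖quinticGL (u x) - quinticGL (v x)‖^2
          ≤ (32 * S * ‖u x - v x‖)^2 := by
            apply pow_le_pow_left₀ hnn this
        _ = (32 * S)^2 * ‖u x - v x‖^2 := by ring
  have hfinal := Real.sqrt_le_sqrt hIle
  rw [Real.sqrt_mul (sq_nonneg _), Real.sqrt_sq (by positivity : (0:ℝ) ≤ 32 * S)] at hfinal
  calc Real.sqrt (∫ x in (0:ℝ)..1, ‖quinticGL (u x) - quinticGL (v x)‖^2)
      ≤ 32 * S * Real.sqrt (∫ x in (0:ℝ)..1, ‖u x - v x‖^2) := hfinal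
    _ = 32 * ((Au + Bu)^2 + (Av + Bv)^2) * Real.sqrt (∫ x in (0:ℝ)..1, ‖u x - v x‖^2) := by
        rw [hS]
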